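/- Let α ∈ 𝔻 be nonzero, n ≥ 1, and θ = b_αⁿ where b_α(z) = (z−α)/(1−conj(α)z). Then Q_θ reduces C_φ (both Q_θ and θH²(𝔻) are invariant under C_φ) if and only if φ is the identity map on 𝔻. -/

import Mathlib

open Complex Metric Filter Set

noncomputable section

/-- A holomorphic self-map of the open unit disc. -/
def SelfMapD (φ : ℂ → ℂ) : Prop :=
  DifferentiableOn ℂ φ (Metric.ball (0:ℂ) 1) ∧
  Set.MapsTo φ (Metric.ball (0:ℂ) 1) (Metric.ball (0:ℂ) 1)

/-- Membership in the Hardy space `H²(𝔻)`. -/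
def MemHardy2 (f : ℂ → ℂ) : Prop :=
  DifferentiableOn ℂ f (Metric.ball (0:ℂ) 1) ∧
  ∃ M : ℝ, ∀ r : ℝ, 0 ≤ r → r < 1 →
    (∫ t in (0:ℝ)..(2 * Real.pi),
      ‖f ((r : ℂ) * Complex.exp (t * Complex.I))‖ ^ 2) ≤ M

/-- An inner function: a bounded-by-one holomorphic function on `𝔻` whose radial
boundary values have modulus one almost everywhere. -/
def InnerFunction (θ : ℂ → ℂ) : Prop :=
  DifferentiableOn ℂ θ (Metric.ball (0:ℂ) 1) ∧
  (∀ z ∈ Metric.ball (0:ℂ) 1, ‖θ z‖ ≤ 1) ∧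
  ∀ᵐ t : ℝ, Filter.Tendsto
    (fun r : ℝ => ‖θ ((r : ℂ) * Complex.exp (t * Complex.I))‖)
    (nhdsWithin 1 (Set.Iio 1)) (nhds 1)

/-- The `n`-th Taylor coefficient of `f` at the origin. -/
def hcoef (f : ℂ → ℂ) (n : ℕ) : ℂ := iteratedDeriv n f 0 / n.factorial

/-- The `H²` inner product, via Taylor coefficients. -/
def hInner (f g : ℂ → ℂ) : ℂ := ∑' n : ℕ, hcoef f n * (starRingEnd ℂ) (hcoef g n)

/-- The square of the `H²` norm. -/
def hNorm2 (f : ℂ → ℂ) : ℝ := ∑' n : ℕ, ‖hcoef f n‖ ^ 2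

/-- Membership in the model space `Q_θ = H² ⊖ θH²`. -/
def MemModel (θ f : ℂ → ℂ) : Prop :=
  MemHardy2 f ∧ ∀ g, MemHardy2 g → hInner f (fun z => θ z * g z) = 0

/-- The model space `Q_θ` is invariant under the composition operator `C_φ`. -/
def ModelInv (θ φ : ℂ → ℂ) : Prop :=
  ∀ f, MemModel θ f → MemModel θ (fun z => f (φ z))

/-- The Beurling subspace `θH²` is invariant under the composition operator `C_φ`. -/
def BeurlingInv (θ φ : ℂ → ℂ) : Prop :=
  ∀ f, MemHardy2 f → ∃ g, MemHardy2 g ∧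
    ∀ z ∈ Metric.ball (0:ℂ) 1, θ (φ z) * f (φ z) = θ z * g z

/-- A subspace of functions is invariant under `C_φ` (as functions on the disc). -/
def SpanInvOn (Q : Submodule ℂ (ℂ → ℂ)) (φ : ℂ → ℂ) : Prop :=
  ∀ f ∈ Q, ∃ g ∈ Q, ∀ z ∈ Metric.ball (0:ℂ) 1, f (φ z) = g z

/-- The (holomorphic extension of the) quotient `(θ∘σ)/θ` lies in `H²`. -/
def QuotInH2 (θ σ : ℂ → ℂ) : Prop :=
  ∃ g, MemHardy2 g ∧ ∀ z ∈ Metric.ball (0:ℂ) 1, θ z ≠ 0 → g z = θ (σ z) / θ z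

/-- The model space spanned by `z^t/(1-ᾱz)^{t+1}`, `0 ≤ t ≤ n-1`. -/
def Qball (α : ℂ) (n : ℕ) : Submodule ℂ (ℂ → ℂ) :=
  Submodule.span ℂ
    {f : ℂ → ℂ | ∃ t : ℕ, t < n ∧ f = fun z => z ^ t / (1 - (starRingEnd ℂ) α * z) ^ (t + 1)}

/-!
Write `β = conj α`. Testing invariance of `Q_θ` on the kernel `1/(1 - βz)` and on `1/(1 - βz)ⁿ`
(which lies in `Q_θ` by the binomial expansion of `1 = (βz + (1 - βz))ⁿ⁻¹`) gives polynomials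
`P`, `S` of degree `< n` with `(1 - βz)ⁿ = P(z)(1 - βφ(z))` and `(1 - βz)ⁿ = S(z)(1 - βφ(z))ⁿ`.
Eliminating `φ` yields the polynomial identity `Pⁿ = S·((1 - βX)ⁿ⁻¹)ⁿ`, so `(1 - βX)ⁿ⁻¹ ∣ P`,
and the degree bound forces `P = c(1 - βX)ⁿ⁻¹`. Hence `1 - βz = c(1 - βφ(z))`: `φ` is affine.
Invariance of `θH²`, tested on `1`, gives `θ(φ(α)) = 0`, i.e. `φ(α) = α`, whence `c = 1`.
-/

open Polynomial ComplexConjugate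

theorem Polynomial.exists_eq_C_mul_of_pow_dvd_pow {K : Type*} [Field K] {p q : K[X]} {n : ℕ}
    (hn : n ≠ 0) (hdvd : q ^ n ∣ p ^ n) (hdeg : p.natDegree ≤ q.natDegree) (hp : p ≠ 0) :
    ∃ r : K, p = C r * q := by
  obtain ⟨s, rfl⟩ := (UniqueFactorizationMonoid.pow_dvd_pow_iff_dvd hn).mp hdvd
  have hs : s ≠ 0 := right_ne_zero_of_mul hp
  rw [natDegree_mul (left_ne_zero_of_mul hp) hs] at hdeg
  exact ⟨s.coeff 0, by rw [mul_comm, ← eq_C_of_natDegree_eq_zero (by omega)]⟩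

theorem Polynomial.natDegree_one_sub_C_mul_X_pow {K : Type*} [Field K] {b : K} (hb : b ≠ 0)
    (m : ℕ) : ((1 - C b * X) ^ m).natDegree = m := by
  have h1 : (1 - C b * X).natDegree = 1 := by compute_degree!
  rw [natDegree_pow, h1, mul_one]

lemma one_sub_conj_mul_ne_zero {α z : ℂ} (hα : ‖α‖ < 1) (hz : z ∈ ball (0 : ℂ) 1) :
    1 - conj α * z ≠ 0 := by
  rw [sub_ne_zero]
  intro h
  have : ‖conj α * z‖ < 1 := by
    rw [norm_mul, Complex.norm_conj]
    nlinarith [norm_nonneg α, norm_nonneg z, mem_ball_zero_iff.mp hz]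
  simp [← h] at this

lemma memHardy2_const (c : ℂ) : MemHardy2 fun _ => c :=
  ⟨differentiableOn_const c, 2 * Real.pi * ‖c‖ ^ 2, fun r _ _ => by simp⟩

-- The identity holds on all of `ℂ`: at the pole `1 - conj α * z = 0` both sides are `x / 0 = 0`.
lemma exists_polynomial_of_mem_Qball {α : ℂ} {n : ℕ} {g : ℂ → ℂ} (hg : g ∈ Qball α n) :
    ∃ R : ℂ[X], R.degree < n ∧ g = fun z => R.eval z / (1 - conj α * z) ^ n := by
  induction hg using Submodule.span_induction with
  | mem f hf =>
    obtain ⟨t, ht, rfl⟩ := hf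
    refine ⟨X ^ t * (1 - C (conj α) * X) ^ (n - 1 - t), ?_, funext fun z => ?_⟩
    · calc _ ≤ ((t + (n - 1 - t) : ℕ) : WithBot ℕ) := by compute_degree; norm_cast
        _ < n := by exact_mod_cast (by omega : t + (n - 1 - t) < n)
    · by_cases hw : 1 - conj α * z = 0
      · simp [hw, show n ≠ 0 by omega]
      · rw [← pow_mul_pow_sub _ (show t + 1 ≤ n by omega), show n - (t + 1) = n - 1 - t by omega]
        simp only [eval_mul, eval_pow, eval_X, eval_sub, eval_one, eval_C]
        exact (mul_div_mul_right _ _ (pow_ne_zero _ hw)).symm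
  | zero => exact ⟨0, by simp, by simp [Pi.zero_def]⟩
  | add f g _ _ hf hg =>
    obtain ⟨R, hR, rfl⟩ := hf
    obtain ⟨S, hS, rfl⟩ := hg
    exact ⟨R + S, (degree_add_le R S).trans_lt (max_lt hR hS), by ext; simp [add_div]⟩
  | smul c f _ hf =>
    obtain ⟨R, hR, rfl⟩ := hf
    exact ⟨c • R, (degree_smul_le c R).trans_lt hR, by ext; simp [mul_div_assoc]⟩

lemma one_div_pow_mem_Qball {α : ℂ} {k n : ℕ} (hk : k < n) :
    (fun z => 1 / (1 - conj α * z) ^ (k + 1)) ∈ Qball α n := by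
  have hsum : (fun z => 1 / (1 - conj α * z) ^ (k + 1)) =
      ∑ t ∈ Finset.range (k + 1), ((k.choose t : ℂ) * conj α ^ t) •
        fun z => z ^ t / (1 - conj α * z) ^ (t + 1) := by
    funext z
    simp only [Finset.sum_apply, Pi.smul_apply, smul_eq_mul]
    by_cases hw : 1 - conj α * z = 0
    · simp [hw]
    rw [div_eq_iff (pow_ne_zero _ hw), Finset.sum_mul]
    calc (1 : ℂ) = (conj α * z + (1 - conj α * z)) ^ k := by ring
      _ = _ := by
        rw [add_pow]
        refine Finset.sum_congr rfl fun t ht => ?_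
        have ht : t ≤ k := Nat.lt_succ_iff.mp (Finset.mem_range.mp ht)
        rw [show k + 1 = (t + 1) + (k - t) by omega, pow_add]
        field_simp
        ring
  rw [hsum]
  exact Submodule.sum_mem _ fun t ht => Submodule.smul_mem _ _
    (Submodule.subset_span ⟨t, by simp at ht; omega, rfl⟩)

theorem SpanInvOn.exists_pow_eq_eval_mul_pow {α : ℂ} {k n : ℕ} {φ : ℂ → ℂ}
    (hinv : SpanInvOn (Qball α n) φ) (hφ : MapsTo φ (ball 0 1) (ball 0 1)) (hα : ‖α‖ < 1)
    (hk : k < n) :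
    ∃ R : ℂ[X], R.degree < n ∧ ∀ z ∈ ball (0 : ℂ) 1,
      (1 - conj α * z) ^ n = R.eval z * (1 - conj α * φ z) ^ (k + 1) := by
  obtain ⟨g, hg, hfg⟩ := hinv _ (one_div_pow_mem_Qball hk)
  obtain ⟨R, hR, rfl⟩ := exists_polynomial_of_mem_Qball hg
  refine ⟨R, hR, fun z hz => ?_⟩
  have h := hfg z hz
  rw [div_eq_div_iff (pow_ne_zero _ (one_sub_conj_mul_ne_zero hα (hφ hz)))
    (pow_ne_zero _ (one_sub_conj_mul_ne_zero hα hz))] at h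
  linear_combination h

theorem SpanInvOn.exists_one_sub_conj_mul_eq {α : ℂ} {m : ℕ} {φ : ℂ → ℂ}
    (hinv : SpanInvOn (Qball α (m + 1)) φ) (hφ : MapsTo φ (ball 0 1) (ball 0 1))
    (hα : ‖α‖ < 1) (hα0 : α ≠ 0) :
    ∃ r : ℂ, ∀ z ∈ ball (0 : ℂ) 1, 1 - conj α * z = r * (1 - conj α * φ z) := by
  set p : ℂ[X] := 1 - C (conj α) * X
  have hp : ∀ z, p.eval z = 1 - conj α * z := fun z => by simp [p]
  obtain ⟨P, hPdeg, hP⟩ := hinv.exists_pow_eq_eval_mul_pow hφ hα (k := 0) m.succ_pos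
  obtain ⟨S, -, hS⟩ := hinv.exists_pow_eq_eval_mul_pow hφ hα m.lt_succ_self
  simp only [zero_add, pow_one] at hP
  have hP0 : P ≠ 0 := by
    rintro rfl
    simpa using hP 0 (mem_ball_self one_pos)
  have hpow : P ^ (m + 1) = S * (p ^ m) ^ (m + 1) := by
    refine eq_of_infinite_eval_eq _ _
      ((infinite_of_mem_nhds 0 (ball_mem_nhds 0 one_pos)).mono fun z hz => ?_)
    simp only [Set.mem_ofPred_eq, eval_pow, eval_mul, hp]
    refine mul_right_cancel₀ (pow_ne_zero (m + 1) (one_sub_conj_mul_ne_zero hα (hφ hz))) ?_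
    calc P.eval z ^ (m + 1) * (1 - conj α * φ z) ^ (m + 1)
        = ((1 - conj α * z) ^ (m + 1)) ^ (m + 1) := by rw [hP z hz, mul_pow]
      _ = S.eval z * ((1 - conj α * z) ^ m) ^ (m + 1) * (1 - conj α * φ z) ^ (m + 1) := by
        rw [← pow_mul, ← pow_mul, show (m + 1) * (m + 1) = m * (m + 1) + (m + 1) by ring,
          pow_add, hS z hz]
        ring
  have hdeg : P.natDegree ≤ (p ^ m).natDegree := by
    rw [natDegree_one_sub_C_mul_X_pow (by simpa using hα0)]
    exact Nat.lt_succ_iff.mp ((natDegree_lt_iff_degree_lt hP0).mpr hPdeg)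
  obtain ⟨r, hr⟩ := exists_eq_C_mul_of_pow_dvd_pow m.succ_ne_zero
    (Dvd.intro_left _ hpow.symm) hdeg hP0
  refine ⟨r, fun z hz => mul_left_cancel₀ (pow_ne_zero m (one_sub_conj_mul_ne_zero hα hz)) ?_⟩
  have h := hP z hz
  rw [hr, eval_mul, eval_C, eval_pow, hp] at h
  linear_combination h

theorem BeurlingInv.apply_eq_self {α : ℂ} {n : ℕ} {φ : ℂ → ℂ}
    (h : BeurlingInv (fun z => ((z - α) / (1 - conj α * z)) ^ n) φ) (hn : n ≠ 0)
    (hα : α ∈ ball (0 : ℂ) 1) (hφα : φ α ∈ ball (0 : ℂ) 1) : φ α = α := by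
  obtain ⟨g, -, hg⟩ := h _ (memHardy2_const 1)
  have h0 := hg α hα
  simp only [sub_self, zero_div, mul_one, zero_pow hn, zero_mul, pow_eq_zero_iff hn,
    div_eq_zero_iff] at h0
  exact sub_eq_zero.mp <| h0.resolve_right
    (one_sub_conj_mul_ne_zero (mem_ball_zero_iff.mp hα) hφα)

/-- for `θ = b_αⁿ` with `α ≠ 0`, the model space `Q_θ` reduces `C_φ` iff `φ`
is the identity map. -/
theorem blaschke_power_model_space_reduces_iff
    (α : ℂ) (hα : α ∈ Metric.ball (0:ℂ) 1) (hα0 : α ≠ 0)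
    (n : ℕ) (hn : 1 ≤ n) (φ : ℂ → ℂ) (hφ : SelfMapD φ) :
    (SpanInvOn (Qball α n) φ ∧
      BeurlingInv (fun z => ((z - α) / (1 - (starRingEnd ℂ) α * z)) ^ n) φ) ↔
      ∀ z ∈ Metric.ball (0:ℂ) 1, φ z = z := by
  obtain ⟨m, rfl⟩ := Nat.exists_eq_add_of_le' hn
  have hαn : ‖α‖ < 1 := mem_ball_zero_iff.mp hα
  constructor
  · rintro ⟨hinv, hbeur⟩
    have hfix : φ α = α := hbeur.apply_eq_self m.succ_ne_zero hα (hφ.2 hα)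
    obtain ⟨r, hr⟩ := hinv.exists_one_sub_conj_mul_eq hφ.2 hαn hα0
    have hr1 : r = 1 := by
      have h := hr α hα
      rw [hfix] at h
      exact (mul_eq_right₀ (one_sub_conj_mul_ne_zero hαn hα)).mp h.symm
    intro z hz
    have h := hr z hz
    rw [hr1, one_mul, sub_right_inj] at h
    exact (mul_left_cancel₀ (by simpa using hα0) h).symm
  · intro hid
    exact ⟨fun f hf => ⟨f, hf, fun z hz => by rw [hid z hz]⟩,
      fun f hf => ⟨f, hf, fun z hz => by rw [hid z hz]⟩⟩
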